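/- If P has full rank, uᵀ c > 0, and f has no fixed point, then det(M₋) ≥ 0 and det(M₊) ≤ 0. -/
import Mathlib


open Matrix

/-- Auxiliary: an invertible matrix gives a solution to `M *ᵥ x = c` whose
first coordinate is given by Cramer's rule. -/
lemma stmt16_aux {n : ℕ} (M : Matrix (Fin n) (Fin n) ℝ) (c : Fin n → ℝ)
    (e0 : Fin n) (hdet : M.det ≠ 0) :
    ∃ x : Fin n → ℝ, M *ᵥ x = c ∧ x e0 = (M.det)⁻¹ * (M.updateCol e0 c).det := by
  refine ⟨(M.det)⁻¹ • (M.adjugate *ᵥ c), ?_, ?_⟩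
  · rw [Matrix.mulVec_smul, Matrix.mulVec_mulVec, Matrix.mul_adjugate,
      Matrix.smul_mulVec, Matrix.one_mulVec, smul_smul, inv_mul_cancel₀ hdet, one_smul]
  · have h := congrFun (Matrix.cramer_eq_adjugate_mulVec M c) e0
    rw [Matrix.cramer_apply] at h
    simp only [Pi.smul_apply, smul_eq_mul, ← h]

lemma stmt16_vecMulVec {n : ℕ} (b : Fin n → ℝ) (e0 : Fin n) (x : Fin n → ℝ) :
    vecMulVec b (Pi.single e0 (1 : ℝ)) *ᵥ x = x e0 • b := by
  ext i
  simp [vecMulVec_apply, mulVec, dotProduct, Pi.single_apply, mul_comm, mul_assoc,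
    Finset.sum_ite_eq']

theorem stmt16 (n : ℕ) (hn : 2 ≤ n) (A : Matrix (Fin n) (Fin n) ℝ) (b c : Fin n → ℝ)
    (f : (Fin n → ℝ) → (Fin n → ℝ))
    (hf : ∀ x : Fin n → ℝ, f x = A.mulVec x + |x ⟨0, by omega⟩| • b + c)
    (hP : LinearIndependent ℝ
      (fun j : Fin (n - 1) => fun i : Fin n => (1 - A) i ⟨j.1 + 1, by have := j.2; omega⟩))
    (huc : 0 < vecMul (Pi.single (⟨0, by omega⟩ : Fin n) (1 : ℝ)) (adjugate (1 - A)) ⬝ᵥ c)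
    (hnofix : ∀ x : Fin n → ℝ, f x ≠ x) :
    0 ≤ (1 - A + vecMulVec b (Pi.single (⟨0, by omega⟩ : Fin n) (1 : ℝ))).det ∧
    (1 - A - vecMulVec b (Pi.single (⟨0, by omega⟩ : Fin n) (1 : ℝ))).det ≤ 0 := by
  have hn0 : 0 < n := by omega
  set e0 : Fin n := ⟨0, hn0⟩ with he0
  -- the key positive quantity
  have hK : 0 < ((1 - A).updateCol e0 c).det := by
    have h : vecMul (Pi.single e0 (1 : ℝ)) (adjugate (1 - A)) ⬝ᵥ c
        = ((1 - A).updateCol e0 c).det := by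
      rw [Matrix.single_one_vecMul]
      have h2 := congrFun (Matrix.cramer_eq_adjugate_mulVec (1 - A) c) e0
      rw [Matrix.cramer_apply] at h2
      rw [h2]
      rfl
    rw [← h]
    exact huc
  constructor
  · by_contra hlt
    push_neg at hlt
    set M : Matrix (Fin n) (Fin n) ℝ :=
      1 - A + vecMulVec b (Pi.single e0 (1 : ℝ)) with hM
    have hdet : M.det ≠ 0 := ne_of_lt hlt
    obtain ⟨x, hMx, hx0⟩ := stmt16_aux M c e0 hdet
    have hcol : M.updateCol e0 c = (1 - A).updateCol e0 c := by
      ext i j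
      by_cases hj : j = e0 <;>
        simp [Matrix.updateCol_apply, hj, hM, vecMulVec_apply, Pi.single_apply]
    have hx0neg : x e0 < 0 := by
      rw [hx0, hcol]
      exact mul_neg_of_neg_of_pos (inv_lt_zero.mpr hlt) hK
    refine hnofix x ?_
    rw [hf]
    have habs : |x e0| = -(x e0) := abs_of_neg hx0neg
    have hMx' : x - A *ᵥ x + x e0 • b = c := by
      rw [← hMx, hM, Matrix.add_mulVec, Matrix.sub_mulVec, Matrix.one_mulVec,
        stmt16_vecMulVec]
    have : |x e0| • b = -(x e0 • b) := by rw [habs, neg_smul]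
    rw [this, ← hMx']
    abel
  · by_contra hlt
    push_neg at hlt
    set M : Matrix (Fin n) (Fin n) ℝ :=
      1 - A - vecMulVec b (Pi.single e0 (1 : ℝ)) with hM
    have hdet : M.det ≠ 0 := ne_of_gt hlt
    obtain ⟨x, hMx, hx0⟩ := stmt16_aux M c e0 hdet
    have hcol : M.updateCol e0 c = (1 - A).updateCol e0 c := by
      ext i j
      by_cases hj : j = e0 <;>
        simp [Matrix.updateCol_apply, hj, hM, vecMulVec_apply, Pi.single_apply]
    have hx0pos : 0 < x e0 := by
      rw [hx0, hcol]
      exact mul_pos (inv_pos.mpr hlt) hK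
    refine hnofix x ?_
    rw [hf]
    have habs : |x e0| = x e0 := abs_of_pos hx0pos
    have hMx' : x - A *ᵥ x - x e0 • b = c := by
      rw [← hMx, hM, Matrix.sub_mulVec, Matrix.sub_mulVec, Matrix.one_mulVec,
        stmt16_vecMulVec]
    rw [habs, ← hMx']
    abel
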